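/- If w is a solution of -w'' = ξ² w (ξ > 0) and y(t) = w(s(t))·√(2t - at²) with s(t) = (1/2)log(Mt/(2-at)) + π/(2ξ), then -y'' = (1+ξ²)(2t-at²)^{-2} y on (0, 2/a). -/

import Mathlib

/-!
Liouville's transformation: if `s' = 1 / g ^ 2` and `g'' = -κ / g ^ 3`, then for `w'' = -c w` the
first-order terms of `((w ∘ s) * g)''` cancel and `((w ∘ s) * g)'' = -(c + κ) / g ^ 4 * (w ∘ s) * g`.
Here `s' = 1 / (t (2 - at))`, and `g = √(2t - at²)` has `g ^ 3 g'' = -(a (2t - at²) + (1 - at)²) = -1`,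
so `κ = 1` and `g ^ 4 = (2t - at²) ^ 2`.
-/

open Real Set Filter

theorem deriv_deriv_comp_mul_eq {w w' s g g' : ℝ → ℝ} {U : Set ℝ} {c κ t : ℝ}
    (hU : IsOpen U) (ht : t ∈ U)
    (hw : ∀ x, HasDerivAt w (w' x) x) (hw' : ∀ x, HasDerivAt w' (-(c * w x)) x)
    (hs : ∀ u ∈ U, HasDerivAt s (g u ^ 2)⁻¹ u) (hg : ∀ u ∈ U, HasDerivAt g (g' u) u)
    (hg' : ∀ u ∈ U, HasDerivAt g' (-(κ / g u ^ 3)) u) (hg0 : ∀ u ∈ U, g u ≠ 0) :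
    deriv (deriv fun u => w (s u) * g u) t = -((c + κ) / g t ^ 4) * (w (s t) * g t) := by
  have hy : ∀ u ∈ U,
      HasDerivAt (fun u => w (s u) * g u) (w' (s u) / g u + w (s u) * g' u) u := by
    intro u hu
    refine (((hw (s u)).comp u (hs u hu)).mul (hg u hu)).congr_deriv ?_
    simp only [Function.comp_apply]
    field_simp [hg0 u hu]
  have hy' : HasDerivAt (fun u => w' (s u) / g u + w (s u) * g' u)
      (-((c + κ) / g t ^ 4) * (w (s t) * g t)) t := by
    refine ((((hw' (s t)).comp t (hs t ht)).div (hg t ht) (hg0 t ht)).add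
      (((hw (s t)).comp t (hs t ht)).mul (hg' t ht))).congr_deriv ?_
    simp only [Function.comp_apply]
    field_simp [hg0 t ht]
    ring
  have hderiv : deriv (fun u => w (s u) * g u) =ᶠ[nhds t]
      fun u => w' (s u) / g u + w (s u) * g' u :=
    eventually_of_mem (hU.mem_nhds ht) fun u hu => (hy u hu).deriv
  rw [hderiv.deriv_eq, hy'.deriv]

section Interval

variable {a t : ℝ}

theorem two_sub_mul_pos_of_mem_Ioo (ha : 0 < a) (ht : t ∈ Ioo 0 (2 / a)) : 0 < 2 - a * t := by
  have := (lt_div_iff₀ ha).mp ht.2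
  linarith

theorem two_mul_sub_mul_sq_pos_of_mem_Ioo (ha : 0 < a) (ht : t ∈ Ioo 0 (2 / a)) :
    0 < 2 * t - a * t ^ 2 := by
  have := mul_pos ht.1 (two_sub_mul_pos_of_mem_Ioo ha ht)
  linarith

theorem hasDerivAt_half_log_div_add {M : ℝ} (c : ℝ) (hM : M ≠ 0) (ht : t ≠ 0)
    (h2 : 2 - a * t ≠ 0) :
    HasDerivAt (fun u => 1 / 2 * log (M * u / (2 - a * u)) + c) (2 * t - a * t ^ 2)⁻¹ t := by
  have hquot : HasDerivAt (fun u => M * u / (2 - a * u))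
      ((M * 1 * (2 - a * t) - M * t * -(a * 1)) / (2 - a * t) ^ 2) t :=
    ((hasDerivAt_id t).const_mul M).div (((hasDerivAt_id t).const_mul a).const_sub 2) h2
  refine (((hquot.log (by simp [hM, ht, h2])).const_mul (1 / 2)).add_const c).congr_deriv ?_
  field_simp
  ring

theorem hasDerivAt_sqrt_two_mul_sub_mul_sq (h : 2 * t - a * t ^ 2 ≠ 0) :
    HasDerivAt (fun u => √(2 * u - a * u ^ 2)) ((1 - a * t) / √(2 * t - a * t ^ 2)) t := by
  have hφ : HasDerivAt (fun u => 2 * u - a * u ^ 2) (2 * 1 - a * (↑2 * t ^ (2 - 1))) t :=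
    ((hasDerivAt_id t).const_mul 2).sub ((hasDerivAt_pow 2 t).const_mul a)
  refine (hφ.sqrt h).congr_deriv ?_
  field_simp
  ring

theorem hasDerivAt_one_sub_mul_div_sqrt (h : 0 < 2 * t - a * t ^ 2) :
    HasDerivAt (fun u => (1 - a * u) / √(2 * u - a * u ^ 2))
      (-(1 / √(2 * t - a * t ^ 2) ^ 3)) t := by
  have hsq : √(2 * t - a * t ^ 2) ^ 2 = 2 * t - a * t ^ 2 := sq_sqrt h.le
  have hpos : 0 < √(2 * t - a * t ^ 2) := sqrt_pos.mpr h
  refine ((((hasDerivAt_id t).const_mul a).const_sub 1).div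
    (hasDerivAt_sqrt_two_mul_sub_mul_sq h.ne') hpos.ne').congr_deriv ?_
  generalize √(2 * t - a * t ^ 2) = g at hsq hpos ⊢
  simp only [id]
  field_simp
  linear_combination -a * hsq

end Interval

theorem liouville_normal_form_reduction_general (a M ξ : ℝ)
    (ha : 0 < a) (hM : 0 < M)
    (w : ℝ → ℝ) (hw : ContDiff ℝ 2 w)
    (hweq : ∀ s : ℝ, deriv (deriv w) s = -(ξ ^ 2 * w s)) :
    ∀ t ∈ Ioo (0 : ℝ) (2 / a),
      deriv (deriv (fun t : ℝ =>
          w (1 / 2 * Real.log (M * t / (2 - a * t)) + π / (2 * ξ)) *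
            Real.sqrt (2 * t - a * t ^ 2))) t +
        (1 + ξ ^ 2) * ((2 * t - a * t ^ 2) ^ 2)⁻¹ *
          (w (1 / 2 * Real.log (M * t / (2 - a * t)) + π / (2 * ξ)) *
            Real.sqrt (2 * t - a * t ^ 2)) = 0 := by
  intro t ht
  have hw' : ∀ x, HasDerivAt w (deriv w x) x := fun x =>
    (hw.differentiable two_ne_zero x).hasDerivAt
  have hw'' : ∀ x, HasDerivAt (deriv w) (-(ξ ^ 2 * w x)) x := fun x => by
    simpa only [hweq] using ((hw.deriv' (n := 1)).differentiable one_ne_zero x).hasDerivAt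
  have hφ : ∀ u ∈ Ioo 0 (2 / a), 0 < 2 * u - a * u ^ 2 := fun u hu =>
    two_mul_sub_mul_sq_pos_of_mem_Ioo ha hu
  rw [deriv_deriv_comp_mul_eq (κ := 1) isOpen_Ioo ht hw' hw''
    (fun u hu => by
      simpa only [sq_sqrt (hφ u hu).le] using hasDerivAt_half_log_div_add (π / (2 * ξ)) hM.ne'
        hu.1.ne' (two_sub_mul_pos_of_mem_Ioo ha hu).ne')
    (fun u hu => hasDerivAt_sqrt_two_mul_sub_mul_sq (hφ u hu).ne')
    (fun u hu => hasDerivAt_one_sub_mul_div_sqrt (hφ u hu))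
    (fun u hu => (sqrt_pos.mpr (hφ u hu)).ne'),
    show √(2 * t - a * t ^ 2) ^ 4 = (2 * t - a * t ^ 2) ^ 2 by
      rw [show 4 = 2 * 2 from rfl, pow_mul, sq_sqrt (hφ t ht).le]]
  ring

theorem liouville_normal_form_reduction (a M ξ : ℝ)
    (ha : 0 < a) (hM : 0 < M) (hξ : 0 < ξ)
    (w : ℝ → ℝ) (hw : ContDiff ℝ 2 w)
    (hweq : ∀ s : ℝ, deriv (deriv w) s = -(ξ ^ 2 * w s)) :
    ∀ t ∈ Ioo (0 : ℝ) (2 / a),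
      deriv (deriv (fun t : ℝ =>
          w (1 / 2 * Real.log (M * t / (2 - a * t)) + π / (2 * ξ)) *
            Real.sqrt (2 * t - a * t ^ 2))) t +
        (1 + ξ ^ 2) * ((2 * t - a * t ^ 2) ^ 2)⁻¹ *
          (w (1 / 2 * Real.log (M * t / (2 - a * t)) + π / (2 * ξ)) *
            Real.sqrt (2 * t - a * t ^ 2)) = 0 :=
  liouville_normal_form_reduction_general a M ξ ha hM w hw hweq
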